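/- Entropy of the Gibbs weights is strictly decreasing for positive β: let n ≥ 1 and e : Fin n → ℝ be such that the squared errors e_i² are not all equal. Let Q(β) = Σ_j exp(-β e_j²), p_i(β) = exp(-β e_i²)/Q(β), and H(β) = -Σ_i p_i(β) ln p_i(β). Then H is strictly decreasing on the interval (0, ∞) (and strictly increasing on (-∞, 0)); in particular H(β) < H(0) = ln n for every β ≠ 0. -/

import Mathlib

/-!
With energies `a i` (here `e i ^ 2`), the entropy of the Gibbs weights is
`H β = log Z β + β U β`, where `U` is the mean energy. Since `Z' = -Z U` and
`U' = -Var`, the variance of the energy under the Gibbs weights, the two `U` terms cancel and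
`H' β = -β Var β`. The variance is positive as soon as the energies are not all equal, so
`H` decreases on `[0, ∞)` and increases on `(-∞, 0]`, with maximum `H 0 = log n`.
-/

open Real Finset Set

lemma hasDerivAt_exp_neg_mul (c β : ℝ) :
    HasDerivAt (fun x => exp (-x * c)) (-c * exp (-β * c)) β := by
  simpa [mul_comm] using ((hasDerivAt_neg β).mul_const c).exp

namespace Gibbs

variable {ι : Type*} [Fintype ι] (a : ι → ℝ)

noncomputable def partitionFunction (β : ℝ) : ℝ := ∑ i, exp (-β * a i)

noncomputable def weight (β : ℝ) (i : ι) : ℝ := exp (-β * a i) / partitionFunction a β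

noncomputable def meanEnergy (β : ℝ) : ℝ := ∑ i, weight a β i * a i

noncomputable def energyVariance (β : ℝ) : ℝ := ∑ i, weight a β i * (a i - meanEnergy a β) ^ 2

noncomputable def entropy (β : ℝ) : ℝ := -∑ i, weight a β i * log (weight a β i)

variable {a}

lemma partitionFunction_pos [Nonempty ι] (β : ℝ) : 0 < partitionFunction a β :=
  Finset.sum_pos (fun _ _ => exp_pos _) univ_nonempty

lemma partitionFunction_zero : partitionFunction a 0 = Fintype.card ι := by
  simp [partitionFunction]

lemma weight_pos [Nonempty ι] (β : ℝ) (i : ι) : 0 < weight a β i :=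
  div_pos (exp_pos _) (partitionFunction_pos β)

lemma sum_weight [Nonempty ι] (β : ℝ) : ∑ i, weight a β i = 1 := by
  simp only [weight, ← Finset.sum_div]
  exact div_self (partitionFunction_pos β).ne'

lemma log_weight [Nonempty ι] (β : ℝ) (i : ι) :
    log (weight a β i) = -β * a i - log (partitionFunction a β) := by
  rw [weight, log_div (exp_pos _).ne' (partitionFunction_pos β).ne', log_exp]

lemma sum_weight_mul_sub_meanEnergy [Nonempty ι] (β : ℝ) :
    ∑ i, weight a β i * (a i - meanEnergy a β) = 0 := by
  simp only [mul_sub, Finset.sum_sub_distrib, ← Finset.sum_mul, sum_weight, one_mul, meanEnergy,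
    sub_self]

lemma entropy_eq_log_partitionFunction_add [Nonempty ι] (β : ℝ) :
    entropy a β = log (partitionFunction a β) + β * meanEnergy a β := by
  have hsum := sum_weight (a := a) β
  calc entropy a β
      = β * meanEnergy a β + log (partitionFunction a β) * ∑ i, weight a β i := by
        simp only [entropy, log_weight, meanEnergy, Finset.mul_sum, ← Finset.sum_add_distrib,
          ← Finset.sum_neg_distrib]
        exact Finset.sum_congr rfl fun i _ => by ring
    _ = log (partitionFunction a β) + β * meanEnergy a β := by rw [hsum]; ring

lemma entropy_zero [Nonempty ι] : entropy a 0 = log (Fintype.card ι) := by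
  rw [entropy_eq_log_partitionFunction_add, partitionFunction_zero, zero_mul, add_zero]

lemma hasDerivAt_partitionFunction [Nonempty ι] (β : ℝ) :
    HasDerivAt (partitionFunction a) (-(partitionFunction a β * meanEnergy a β)) β := by
  have hZ := (partitionFunction_pos (a := a) β).ne'
  refine (HasDerivAt.fun_sum (u := univ) fun i _ => hasDerivAt_exp_neg_mul (a i) β).congr_deriv ?_
  simp only [meanEnergy, weight, Finset.mul_sum, ← Finset.sum_neg_distrib]
  refine Finset.sum_congr rfl fun i _ => ?_
  field_simp

lemma hasDerivAt_weight [Nonempty ι] (β : ℝ) (i : ι) :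
    HasDerivAt (fun x => weight a x i) (-(weight a β i * (a i - meanEnergy a β))) β := by
  have hZ := (partitionFunction_pos (a := a) β).ne'
  refine ((hasDerivAt_exp_neg_mul (a i) β).div (hasDerivAt_partitionFunction β) hZ).congr_deriv ?_
  simp only [weight]
  field_simp
  ring

lemma hasDerivAt_meanEnergy [Nonempty ι] (β : ℝ) :
    HasDerivAt (meanEnergy a) (-energyVariance a β) β := by
  refine (HasDerivAt.fun_sum (u := univ) fun i _ =>
    (hasDerivAt_weight (a := a) β i).mul_const (a i)).congr_deriv ?_
  have h := sum_weight_mul_sub_meanEnergy (a := a) β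
  calc ∑ i, -(weight a β i * (a i - meanEnergy a β)) * a i
      = -(energyVariance a β + meanEnergy a β * ∑ i, weight a β i * (a i - meanEnergy a β)) := by
        rw [energyVariance, Finset.mul_sum, ← Finset.sum_add_distrib, ← Finset.sum_neg_distrib]
        exact Finset.sum_congr rfl fun i _ => by ring
    _ = -energyVariance a β := by rw [h, mul_zero, add_zero]

lemma hasDerivAt_entropy [Nonempty ι] (β : ℝ) :
    HasDerivAt (entropy a) (-(β * energyVariance a β)) β := by
  have hZ := (partitionFunction_pos (a := a) β).ne'
  have hlog := (hasDerivAt_partitionFunction (a := a) β).log hZ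
  rw [funext (entropy_eq_log_partitionFunction_add (a := a))]
  refine (hlog.add ((hasDerivAt_id' β).mul (hasDerivAt_meanEnergy β))).congr_deriv ?_
  rw [neg_div, mul_div_cancel_left₀ _ hZ]
  ring

lemma energyVariance_pos (h : ∃ i j, a i ≠ a j) (β : ℝ) : 0 < energyVariance a β := by
  obtain ⟨i, j, hij⟩ := h
  have : Nonempty ι := ⟨i⟩
  obtain ⟨k, hk⟩ : ∃ k, a k ≠ meanEnergy a β := by
    by_contra! h
    exact hij ((h i).trans (h j).symm)
  refine Finset.sum_pos' (fun i _ => mul_nonneg (weight_pos β i).le (sq_nonneg _))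
    ⟨k, mem_univ k, mul_pos (weight_pos β k) (sq_pos_of_ne_zero (sub_ne_zero.mpr hk))⟩

lemma entropy_strictAntiOn (h : ∃ i j, a i ≠ a j) : StrictAntiOn (entropy a) (Ici 0) := by
  have : Nonempty ι := let ⟨i, _⟩ := h; ⟨i⟩
  refine strictAntiOn_of_deriv_neg (convex_Ici 0)
    (fun β _ => (hasDerivAt_entropy β).continuousAt.continuousWithinAt) fun β hβ => ?_
  rw [interior_Ici] at hβ
  rw [(hasDerivAt_entropy β).deriv, neg_lt_zero]
  exact mul_pos hβ (energyVariance_pos h β)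

lemma entropy_strictMonoOn (h : ∃ i j, a i ≠ a j) : StrictMonoOn (entropy a) (Iic 0) := by
  have : Nonempty ι := let ⟨i, _⟩ := h; ⟨i⟩
  refine strictMonoOn_of_deriv_pos (convex_Iic 0)
    (fun β _ => (hasDerivAt_entropy β).continuousAt.continuousWithinAt) fun β hβ => ?_
  rw [interior_Iic] at hβ
  rw [(hasDerivAt_entropy β).deriv, neg_pos]
  exact mul_neg_of_neg_of_pos hβ (energyVariance_pos h β)

end Gibbs

open Gibbs in
theorem gibbs_entropy_strict_monotonicity_general
    (n : ℕ) (e : Fin n → ℝ)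
    (hne : ∃ i j, (e i) ^ 2 ≠ (e j) ^ 2)
    (Q : ℝ → ℝ) (hQ : ∀ β, Q β = ∑ j, Real.exp (-β * (e j) ^ 2))
    (p : ℝ → Fin n → ℝ) (hp : ∀ β i, p β i = Real.exp (-β * (e i) ^ 2) / Q β)
    (H : ℝ → ℝ) (hH : ∀ β, H β = -∑ i, p β i * Real.log (p β i)) :
    StrictAntiOn H (Set.Ioi 0) ∧ StrictMonoOn H (Set.Iio 0) ∧
    H 0 = Real.log n ∧ (∀ β : ℝ, β ≠ 0 → H β < H 0) := by
  have hH_eq : H = entropy (fun i => e i ^ 2) := by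
    funext β
    simp only [hH, hp, hQ, entropy, weight, partitionFunction]
  have : Nonempty (Fin n) := let ⟨i, _⟩ := hne; ⟨i⟩
  have hanti := entropy_strictAntiOn hne
  have hmono := entropy_strictMonoOn hne
  subst hH_eq
  refine ⟨hanti.mono Ioi_subset_Ici_self, hmono.mono Iio_subset_Iic_self, ?_, fun β hβ => ?_⟩
  · rw [entropy_zero, Fintype.card_fin]
  · rcases hβ.lt_or_gt with h | h
    · exact hmono h.le self_mem_Iic h
    · exact hanti self_mem_Ici h.le h

/-- Entropy of the Gibbs weights is strictly decreasing for positive `β`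
(and strictly increasing for negative `β`): if the squared errors are not all
equal, then `H` is strictly antitone on `(0, ∞)`, strictly monotone on
`(-∞, 0)`, and `H β < H 0 = ln n` for every `β ≠ 0`. -/
theorem gibbs_entropy_strict_monotonicity
    (n : ℕ) (hn : 1 ≤ n) (e : Fin n → ℝ)
    (hne : ∃ i j, (e i) ^ 2 ≠ (e j) ^ 2)
    (Q : ℝ → ℝ) (hQ : ∀ β, Q β = ∑ j, Real.exp (-β * (e j) ^ 2))
    (p : ℝ → Fin n → ℝ) (hp : ∀ β i, p β i = Real.exp (-β * (e i) ^ 2) / Q β)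
    (H : ℝ → ℝ) (hH : ∀ β, H β = -∑ i, p β i * Real.log (p β i)) :
    StrictAntiOn H (Set.Ioi 0) ∧ StrictMonoOn H (Set.Iio 0) ∧
    H 0 = Real.log n ∧ (∀ β : ℝ, β ≠ 0 → H β < H 0) :=
  gibbs_entropy_strict_monotonicity_general n e hne Q hQ p hp H hH
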